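/- Suppose ∫_A |ρ_a(0)| μ(da) < ∞ and there exist an integrable function ξ : A → ℝ and a probability measure Q ≪ P with ρ_a*(Q) ≤ ξ(a) for μ-a.e. a. Then the integral infimal convolution □_{a∈A} ρ_a μ(da) is finite everywhere on L^∞(P); in fact (□ ρ_a μ(da))(X) ≥ E^Q[X] − ∫_A ξ dμ and (□ ρ_a μ(da))(X) ≤ ‖X‖_∞ + ∫_A |ρ_a(0)| dμ. -/

import Mathlib

open MeasureTheory
noncomputable section

variable {Ω A : Type*} [MeasurableSpace Ω] [MeasurableSpace A]

/-- An allocation `(X_a)_{a ∈ A}` is `𝒜`-measurable if all the pairings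
`a ↦ E[X_a Y]`, `Y ∈ L¹(P)`, are measurable. -/
def AllocMeasurable (P : Measure Ω) [IsProbabilityMeasure P]
    (f : A → Lp ℝ ⊤ P) : Prop :=
  ∀ Y : Lp ℝ 1 P, Measurable fun a => ∫ ω, f a ω * Y ω ∂P

/-- An `X`-feasible allocation: a measurable, Gelfand integrable family whose Gelfand
integral is `X` (characterized through all pairings with `L¹(P)`). -/
def IsAllocOf (P : Measure Ω) [IsProbabilityMeasure P] (μ : Measure A)
    (f : A → Lp ℝ ⊤ P) (X : Lp ℝ ⊤ P) : Prop :=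
  AllocMeasurable P f ∧
    ∀ Y : Lp ℝ 1 P, Integrable (fun a => ∫ ω, f a ω * Y ω ∂P) μ ∧
      ∫ a, (∫ ω, f a ω * Y ω ∂P) ∂μ = ∫ ω, X ω * Y ω ∂P

/-- The set of attained total risks `∫_A ρ_a(X_a) μ(da)` over `X`-feasible allocations
with integrable risk; the integral infimal convolution is its infimum. -/
def valSet (P : Measure Ω) [IsProbabilityMeasure P] (μ : Measure A)
    (ρ : A → Lp ℝ ⊤ P → ℝ) (X : Lp ℝ ⊤ P) : Set ℝ :=
  {r : ℝ | ∃ f : A → Lp ℝ ⊤ P, IsAllocOf P μ f X ∧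
    Integrable (fun a => ρ a (f a)) μ ∧ r = ∫ a, ρ a (f a) ∂μ}

open scoped ENNReal

namespace MeasureTheory.Lp

lemma ae_norm_le_norm {E : Type*} [NormedAddCommGroup E] {P : Measure Ω} (Z : Lp E ∞ P) :
    ∀ᵐ ω ∂P, ‖Z ω‖ ≤ ‖Z‖ := by
  simpa [Lp.norm_def, lpNorm, Lp.aestronglyMeasurable Z] using
    ae_le_lpNorm_exponent_top (Lp.memLp Z)

variable {P : Measure Ω} [IsFiniteMeasure P]

lemma le_const_norm (Z : Lp ℝ ∞ P) : Z ≤ Lp.const ∞ P ‖Z‖ := by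
  rw [← Lp.coeFn_le]
  filter_upwards [Lp.coeFn_const (p := ∞) (μ := P) ‖Z‖, ae_norm_le_norm Z] with ω hconst hle
  rw [hconst]
  exact (le_abs_self _).trans hle

lemma const_neg_norm_le (Z : Lp ℝ ∞ P) : Lp.const ∞ P (-‖Z‖) ≤ Z := by
  rw [← Lp.coeFn_le]
  filter_upwards [Lp.coeFn_const (p := ∞) (μ := P) (-‖Z‖), ae_norm_le_norm Z] with ω hconst hle
  rw [hconst]
  exact neg_le_of_abs_le hle

end MeasureTheory.Lp

lemma abs_sub_le_norm_of_monotone_of_cash_additive {P : Measure Ω} [IsFiniteMeasure P]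
    {ρ : Lp ℝ ⊤ P → ℝ} (hmono : Monotone ρ)
    (hcash : ∀ (X : Lp ℝ ⊤ P) (c : ℝ), ρ (X + Lp.const ⊤ P c) = ρ X + c) (Z : Lp ℝ ⊤ P) :
    |ρ Z - ρ 0| ≤ ‖Z‖ := by
  have hupper := hmono (Lp.le_const_norm Z)
  have hlower := hmono (Lp.const_neg_norm_le Z)
  rw [← zero_add (Lp.const _ _ _), hcash] at hupper hlower
  exact abs_sub_le_iff.2 ⟨by linarith, by linarith⟩

lemma isAllocOf_const_smul {P : Measure Ω} [IsProbabilityMeasure P] {μ : Measure A}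
    [IsFiniteMeasure μ] (hμ : μ Set.univ ≠ 0) (X : Lp ℝ ⊤ P) :
    IsAllocOf P μ (fun _ => (μ.real Set.univ)⁻¹ • X) X := by
  refine ⟨fun _ => measurable_const, fun Y => ⟨integrable_const _, ?_⟩⟩
  have hpair : ∫ ω, ((μ.real Set.univ)⁻¹ • X) ω * Y ω ∂P
      = (μ.real Set.univ)⁻¹ * ∫ ω, X ω * Y ω ∂P := by
    rw [← integral_const_mul]
    refine integral_congr_ae ?_
    filter_upwards [Lp.coeFn_smul (μ.real Set.univ)⁻¹ X] with ω hω
    simp only [hω, Pi.smul_apply, smul_eq_mul, mul_assoc]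
  have hμreal : μ.real Set.univ ≠ 0 := (measureReal_ne_zero_iff (measure_ne_top μ _)).2 hμ
  rw [integral_const, smul_eq_mul, hpair, mul_inv_cancel_left₀ hμreal]

lemma exists_Lp_one_integral_mul_eq_integral {P Q : Measure Ω} [IsFiniteMeasure P]
    [IsFiniteMeasure Q] (hQ : Q ≪ P) :
    ∃ Y : Lp ℝ 1 P, ∀ W : Ω → ℝ, ∫ ω, W ω * Y ω ∂P = ∫ ω, W ω ∂Q := by
  have hdens : Integrable (fun ω => (Q.rnDeriv P ω).toReal) P := Measure.integrable_toReal_rnDeriv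
  refine ⟨hdens.toL1 _, fun W => ?_⟩
  rw [← integral_rnDeriv_smul hQ]
  refine integral_congr_ae ?_
  filter_upwards [hdens.coeFn_toL1] with ω hω
  rw [hω, smul_eq_mul, mul_comm]

section IntegralInfConv

variable {P : Measure Ω} [IsProbabilityMeasure P] {μ : Measure A} {ρ : A → Lp ℝ ⊤ P → ℝ}

/-- The proportional allocation `X_a = X / μ(A)` attains this bound. -/
lemma exists_mem_valSet_le [IsFiniteMeasure μ] (hμ : μ Set.univ ≠ 0)
    (hmono : ∀ a, Monotone (ρ a))
    (hcash : ∀ a, ∀ (X : Lp ℝ ⊤ P) (c : ℝ), ρ a (X + Lp.const ⊤ P c) = ρ a X + c)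
    (hfam : ∀ f : A → Lp ℝ ⊤ P, AllocMeasurable P f → Measurable fun a => ρ a (f a))
    (hρ0 : Integrable (fun a => ρ a 0) μ) (X : Lp ℝ ⊤ P) :
    ∃ r ∈ valSet P μ ρ X, r ≤ ‖X‖ + ∫ a, |ρ a 0| ∂μ := by
  set c := (μ.real Set.univ)⁻¹
  have hμreal : 0 < μ.real Set.univ :=
    ENNReal.toReal_pos hμ (measure_ne_top μ _)
  have hbound : ∀ a, |ρ a (c • X) - ρ a 0| ≤ c * ‖X‖ := fun a => by
    have h := abs_sub_le_norm_of_monotone_of_cash_additive (hmono a) (hcash a) (c • X)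
    rwa [norm_smul, Real.norm_eq_abs, abs_of_pos (inv_pos.2 hμreal)] at h
  have hdom : Integrable (fun a => |ρ a 0| + c * ‖X‖) μ := hρ0.abs.add (integrable_const _)
  have halloc := isAllocOf_const_smul hμ X
  have hint : Integrable (fun a => ρ a (c • X)) μ := by
    refine hdom.mono' (hfam _ halloc.1).aestronglyMeasurable (ae_of_all _ fun a => ?_)
    rw [Real.norm_eq_abs]
    linarith [abs_sub_abs_le_abs_sub (ρ a (c • X)) (ρ a 0), hbound a]
  refine ⟨_, ⟨_, halloc, hint, rfl⟩, ?_⟩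
  calc ∫ a, ρ a (c • X) ∂μ ≤ ∫ a, (|ρ a 0| + c * ‖X‖) ∂μ :=
        integral_mono hint hdom fun a => by
          linarith [le_abs_self (ρ a (c • X) - ρ a 0), hbound a, le_abs_self (ρ a 0)]
    _ = ‖X‖ + ∫ a, |ρ a 0| ∂μ := by
        rw [integral_add hρ0.abs (integrable_const _), integral_const, smul_eq_mul,
          mul_inv_cancel_left₀ hμreal.ne', add_comm]

/-- Fenchel's inequality `ρ_a(X_a) ≥ E^Q[X_a] - ξ(a)`, integrated over `a`. -/
lemma integral_sub_integral_le_of_mem_valSet {ξ : A → ℝ} (hξ : Integrable ξ μ)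
    {Q : Measure Ω} [IsFiniteMeasure Q] (hQ : Q ≪ P)
    (hconj : ∀ᵐ a ∂μ, ∀ X : Lp ℝ ⊤ P, ∫ ω, X ω ∂Q - ρ a X ≤ ξ a)
    {X : Lp ℝ ⊤ P} {r : ℝ} (hr : r ∈ valSet P μ ρ X) :
    ∫ ω, X ω ∂Q - ∫ a, ξ a ∂μ ≤ r := by
  obtain ⟨f, hf, hint, rfl⟩ := hr
  obtain ⟨Y, hY⟩ := exists_Lp_one_integral_mul_eq_integral hQ
  obtain ⟨hpair_int, hpair_eq⟩ := hf.2 Y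
  simp only [hY] at hpair_int hpair_eq
  calc ∫ ω, X ω ∂Q - ∫ a, ξ a ∂μ = ∫ a, (∫ ω, f a ω ∂Q - ξ a) ∂μ := by
        rw [integral_sub hpair_int hξ, hpair_eq]
    _ ≤ ∫ a, ρ a (f a) ∂μ :=
        integral_mono_ae (hpair_int.sub hξ) hint
          (hconj.mono fun a ha => by linarith [ha (f a)])

end IntegralInfConv

/-- if `∫ |ρ_a(0)| dμ < ∞` and `ρ_a*(Q) ≤ ξ(a)` a.e. for some integrable
`ξ` and probability measure `Q ≪ P`, then the integral infimal convolution is finite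
everywhere, with the bounds `E^Q[X] - ∫ ξ dμ ≤ (□ ρ_a μ(da))(X) ≤ ‖X‖_∞ + ∫ |ρ_a(0)| dμ`. -/
theorem integralInfConv_globally_finite
    (P : Measure Ω) [IsProbabilityMeasure P]
    (μ : Measure A) [IsFiniteMeasure μ] (hμ : μ Set.univ ≠ 0)
    (ρ : A → Lp ℝ ⊤ P → ℝ)
    (hmono : ∀ a, ∀ X Y : Lp ℝ ⊤ P, X ≤ Y → ρ a X ≤ ρ a Y)
    (hcash : ∀ a, ∀ (X : Lp ℝ ⊤ P) (c : ℝ), ρ a (X + Lp.const ⊤ P c) = ρ a X + c)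
    (hfam : ∀ f : A → Lp ℝ ⊤ P, AllocMeasurable P f → Measurable fun a => ρ a (f a))
    (hρ0 : Integrable (fun a => ρ a (0 : Lp ℝ ⊤ P)) μ)
    (ξ : A → ℝ) (hξ : Integrable ξ μ)
    (Q : Measure Ω) [IsProbabilityMeasure Q] (hQ : Q ≪ P)
    (hconj : ∀ᵐ a ∂μ, ∀ X : Lp ℝ ⊤ P, ∫ ω, X ω ∂Q - ρ a X ≤ ξ a) :
    ∀ X : Lp ℝ ⊤ P,
      (valSet P μ ρ X).Nonempty ∧ BddBelow (valSet P μ ρ X) ∧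
      (∫ ω, X ω ∂Q - ∫ a, ξ a ∂μ ≤ sInf (valSet P μ ρ X)) ∧
      sInf (valSet P μ ρ X) ≤ ‖X‖ + ∫ a, |ρ a (0 : Lp ℝ ⊤ P)| ∂μ := by
  intro X
  obtain ⟨r, hr, hr_le⟩ :=
    exists_mem_valSet_le hμ (fun a _ _ => hmono a _ _) hcash hfam hρ0 X
  have hlower : ∀ s ∈ valSet P μ ρ X, ∫ ω, X ω ∂Q - ∫ a, ξ a ∂μ ≤ s :=
    fun _ => integral_sub_integral_le_of_mem_valSet hξ hQ hconj
  exact ⟨⟨r, hr⟩, ⟨_, hlower⟩, le_csInf ⟨r, hr⟩ hlower, (csInf_le ⟨_, hlower⟩ hr).trans hr_le⟩
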